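/- Let f : ℝ^d → ℝ be L-smooth (gradient L-Lipschitz), λ > 0, and u uniform on √d · S^{d-1}. Define g_λ(x) = ((f(x+λu) − f(x−λu))/(2λ)) u. Then ‖E_u[g_λ(x)] − ∇f(x)‖ ≤ (L/2) λ d^{3/2}. -/

import Mathlib

open MeasureTheory

noncomputable section

/-- `μ` is the uniform distribution on the sphere of radius `r` in `ℝ^n`. -/
def IsUniformSphere {n : ℕ} (μ : Measure (EuclideanSpace ℝ (Fin n))) (r : ℝ) : Prop :=
  IsProbabilityMeasure μ ∧ (∀ᵐ u ∂μ, ‖u‖ = r) ∧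
    ∀ O : EuclideanSpace ℝ (Fin n) ≃ₗᵢ[ℝ] EuclideanSpace ℝ (Fin n), μ.map O = μ

/-!
Applying the quadratic Taylor bound of an `L`-smooth function at `x ± h` gives
`|f (x + h) - f (x - h) - 2 ⟪∇f x, h⟫| ≤ L ‖h‖²`, so on the sphere of radius `√d` the estimator
differs from `⟪∇f x, u⟫ u` by at most `(L/2) λ ‖u‖³ = (L/2) λ d^{3/2}`. Invariance of `μ` under
coordinate sign flips and permutations forces `E[u uᵀ] = (r² / d) I`, so `E[⟪∇f x, u⟫ u] = ∇f x`
and the bias is the mean of that pointwise error.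
-/

open RealInnerProductSpace

section Smooth

variable {E : Type*} [NormedAddCommGroup E] [InnerProductSpace ℝ E] {f : E → ℝ} {L : ℝ}

theorem abs_sub_sub_inner_gradient_le [CompleteSpace E] (hf : Differentiable ℝ f)
    (hL : ∀ x y, ‖gradient f x - gradient f y‖ ≤ L * ‖x - y‖) (x h : E) :
    |f (x + h) - f x - ⟪gradient f x, h⟫| ≤ L / 2 * ‖h‖ ^ 2 := by
  set φ : ℝ → ℝ := fun t => f (x + t • h) - f x - t * ⟪gradient f x, h⟫
  have hφ : ∀ t, HasDerivAt φ ⟪gradient f (x + t • h) - gradient f x, h⟫ t := by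
    intro t
    have hline : HasDerivAt (fun s : ℝ => x + s • h) h t := by
      simpa using ((hasDerivAt_id t).smul_const h).const_add x
    have hcomp := (hf _).hasGradientAt.hasFDerivAt.comp_hasDerivAt t hline
    rw [inner_sub_left]
    exact ((hcomp.sub_const (f x)).sub ((hasDerivAt_id t).mul_const ⟪gradient f x, h⟫)).congr_deriv
      (by simp)
  have hB : ∀ t, HasDerivAt (fun t : ℝ => L / 2 * t ^ 2 * ‖h‖ ^ 2) (L * t * ‖h‖ ^ 2) t := by
    intro t
    exact (((hasDerivAt_pow 2 t).const_mul (L / 2)).mul_const (‖h‖ ^ 2)).congr_deriv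
      (by push_cast; ring)
  have hderiv_le : ∀ t ∈ Set.Ico (0 : ℝ) 1,
      ‖⟪gradient f (x + t • h) - gradient f x, h⟫‖ ≤ L * t * ‖h‖ ^ 2 := fun t ht =>
    calc ‖⟪gradient f (x + t • h) - gradient f x, h⟫‖
        ≤ ‖gradient f (x + t • h) - gradient f x‖ * ‖h‖ := norm_inner_le_norm _ _
      _ ≤ L * ‖t • h‖ * ‖h‖ := by
        gcongr
        simpa using hL (x + t • h) x
      _ = L * t * ‖h‖ ^ 2 := by
        rw [norm_smul, Real.norm_of_nonneg ht.1]; ring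
  have := image_norm_le_of_norm_deriv_right_le_deriv_boundary
    (fun t _ => (hφ t).continuousAt.continuousWithinAt) (fun t _ => (hφ t).hasDerivWithinAt)
    (by simp [φ]) hB hderiv_le (Set.right_mem_Icc.2 zero_le_one)
  simpa [φ] using this

theorem abs_sub_sub_two_inner_gradient_le [CompleteSpace E] (hf : Differentiable ℝ f)
    (hL : ∀ x y, ‖gradient f x - gradient f y‖ ≤ L * ‖x - y‖) (x h : E) :
    |f (x + h) - f (x - h) - 2 * ⟪gradient f x, h⟫| ≤ L * ‖h‖ ^ 2 := by
  have hplus := abs_sub_sub_inner_gradient_le hf hL x h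
  have hminus := abs_sub_sub_inner_gradient_le hf hL x (-h)
  rw [← sub_eq_add_neg, inner_neg_right, norm_neg] at hminus
  calc |f (x + h) - f (x - h) - 2 * ⟪gradient f x, h⟫|
      = |(f (x + h) - f x - ⟪gradient f x, h⟫) - (f (x - h) - f x - -⟪gradient f x, h⟫)| := by
        congr 1; ring
    _ ≤ L / 2 * ‖h‖ ^ 2 + L / 2 * ‖h‖ ^ 2 := (abs_sub _ _).trans (add_le_add hplus hminus)
    _ = L * ‖h‖ ^ 2 := by ring

def twoPointEstimator (f : E → ℝ) (lam : ℝ) (x u : E) : E :=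
  ((f (x + lam • u) - f (x - lam • u)) / (2 * lam)) • u

theorem Continuous.twoPointEstimator (hf : Continuous f) (lam : ℝ) (x : E) :
    Continuous (twoPointEstimator f lam x) := by
  unfold _root_.twoPointEstimator
  fun_prop

theorem norm_twoPointEstimator_sub_le [CompleteSpace E] (hf : Differentiable ℝ f)
    (hL : ∀ x y, ‖gradient f x - gradient f y‖ ≤ L * ‖x - y‖) {lam : ℝ} (hlam : 0 < lam)
    (x u : E) :
    ‖twoPointEstimator f lam x u - ⟪gradient f x, u⟫ • u‖ ≤ L / 2 * lam * ‖u‖ ^ 3 := by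
  have hcentral := abs_sub_sub_two_inner_gradient_le hf hL x (lam • u)
  rw [real_inner_smul_right, norm_smul, Real.norm_of_nonneg hlam.le] at hcentral
  have hquot : (f (x + lam • u) - f (x - lam • u)) / (2 * lam) - ⟪gradient f x, u⟫
      = (f (x + lam • u) - f (x - lam • u) - 2 * (lam * ⟪gradient f x, u⟫)) / (2 * lam) := by
    field_simp
  calc ‖twoPointEstimator f lam x u - ⟪gradient f x, u⟫ • u‖
      = |f (x + lam • u) - f (x - lam • u) - 2 * (lam * ⟪gradient f x, u⟫)| / (2 * lam)
          * ‖u‖ := by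
        rw [twoPointEstimator, ← sub_smul, norm_smul, Real.norm_eq_abs, hquot, abs_div,
          abs_of_pos (by positivity : (0 : ℝ) < 2 * lam)]
    _ ≤ L * (lam * ‖u‖) ^ 2 / (2 * lam) * ‖u‖ := by gcongr
    _ = L / 2 * lam * ‖u‖ ^ 3 := by field_simp

end Smooth

namespace IsUniformSphere

variable {d : ℕ} {μ : Measure (EuclideanSpace ℝ (Fin d))} {r : ℝ}
  {F : Type*} [NormedAddCommGroup F]

theorem integral_comp_linearIsometryEquiv [NormedSpace ℝ F] (hμ : IsUniformSphere μ r)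
    (O : EuclideanSpace ℝ (Fin d) ≃ₗᵢ[ℝ] EuclideanSpace ℝ (Fin d))
    (φ : EuclideanSpace ℝ (Fin d) → F) :
    ∫ u, φ (O u) ∂μ = ∫ u, φ u ∂μ :=
  MeasurePreserving.integral_comp' (f := O.toMeasurableEquiv)
    ⟨O.continuous.measurable, hμ.2.2 O⟩ φ

theorem integrable_of_continuous (hμ : IsUniformSphere μ r) {φ : EuclideanSpace ℝ (Fin d) → F}
    (hφ : Continuous φ) : Integrable φ μ := by
  have := hμ.1
  obtain ⟨C, hC⟩ :=
    (isCompact_sphere (0 : EuclideanSpace ℝ (Fin d)) r).exists_bound_of_continuousOn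
      hφ.continuousOn
  refine Integrable.of_bound hφ.aestronglyMeasurable C ?_
  filter_upwards [hμ.2.1] with u hu
  exact hC u (mem_sphere_zero_iff_norm.2 hu)

theorem integral_apply_mul_apply_of_ne (hμ : IsUniformSphere μ r) {i j : Fin d} (hij : i ≠ j) :
    ∫ u, u i * u j ∂μ = 0 := by
  classical
  let O : EuclideanSpace ℝ (Fin d) ≃ₗᵢ[ℝ] EuclideanSpace ℝ (Fin d) :=
    LinearIsometryEquiv.piLpCongrRight 2
      (fun k => if k = j then LinearIsometryEquiv.neg ℝ else LinearIsometryEquiv.refl ℝ ℝ)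
  have hO : ∀ u, (O u) i * (O u) j = -(u i * u j) := by
    intro u
    simp [O, LinearIsometryEquiv.piLpCongrRight_apply, hij]
  have := hμ.integral_comp_linearIsometryEquiv O (fun u => u i * u j)
  simp only [hO, integral_neg] at this
  linarith

theorem integral_apply_sq (hμ : IsUniformSphere μ r) (i : Fin d) :
    ∫ u, u i ^ 2 ∂μ = r ^ 2 / d := by
  have := hμ.1
  have hswap : ∀ k, ∫ u, u k ^ 2 ∂μ = ∫ u, u i ^ 2 ∂μ := by
    intro k
    have := hμ.integral_comp_linearIsometryEquiv
      (LinearIsometryEquiv.piLpCongrLeft 2 ℝ ℝ (Equiv.swap i k)) (fun u => u k ^ 2)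
    simpa [LinearIsometryEquiv.piLpCongrLeft_apply, Equiv.piCongrLeft'_apply] using this.symm
  have hsum : ∑ k, ∫ u, u k ^ 2 ∂μ = r ^ 2 := by
    rw [← integral_finsetSum _ fun k _ => hμ.integrable_of_continuous (by fun_prop)]
    calc ∫ u, ∑ k, u k ^ 2 ∂μ = ∫ _, r ^ 2 ∂μ := by
          refine integral_congr_ae ?_
          filter_upwards [hμ.2.1] with u hu
          rw [← hu, EuclideanSpace.real_norm_sq_eq]
      _ = r ^ 2 := by simp
  simp only [hswap, Finset.sum_const, Finset.card_univ, Fintype.card_fin, nsmul_eq_mul] at hsum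
  have hd : (d : ℝ) ≠ 0 := by have := i.pos; positivity
  rw [← hsum]
  field_simp

theorem integral_inner_smul (hμ : IsUniformSphere μ r) (g : EuclideanSpace ℝ (Fin d)) :
    ∫ u, ⟪g, u⟫ • u ∂μ = (r ^ 2 / d) • g := by
  ext j
  have hcoord : ∀ u : EuclideanSpace ℝ (Fin d), ⟪g, u⟫ * u j = ∑ i, g i * (u i * u j) := by
    intro u
    simp only [PiLp.inner_apply, RCLike.inner_apply, conj_trivial, Finset.sum_mul]
    exact Finset.sum_congr rfl fun i _ => by ring
  have hproj : (∫ u, ⟪g, u⟫ • u ∂μ) j = ∫ u, ⟪g, u⟫ * u j ∂μ :=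
    ((EuclideanSpace.proj j).integral_comp_comm
      (hμ.integrable_of_continuous (φ := fun u => ⟪g, u⟫ • u) (by fun_prop))).symm
  rw [hproj, integral_congr_ae (Filter.Eventually.of_forall hcoord),
    integral_finsetSum _ fun i _ => (hμ.integrable_of_continuous (by fun_prop)).const_mul _,
    Finset.sum_eq_single j (fun i _ hij => by
      rw [integral_const_mul, hμ.integral_apply_mul_apply_of_ne hij, mul_zero]) (by simp),
    integral_const_mul]
  simp only [← sq, hμ.integral_apply_sq, PiLp.smul_apply, smul_eq_mul]
  ring

end IsUniformSphere

/-- For an `L`-smooth `f` and `u` uniform on the sphere of radius `√d`, the mean of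
the two-point estimator `g_λ(x) = ((f(x+λu) − f(x−λu))/(2λ)) u` satisfies
`‖E[g_λ(x)] − ∇f(x)‖ ≤ (L/2) λ d^{3/2}`. -/
theorem two_point_estimator_bias (d : ℕ) (hd : 1 ≤ d) (L lam : ℝ) (hlam : 0 < lam)
    (f : EuclideanSpace ℝ (Fin d) → ℝ) (hf : Differentiable ℝ f)
    (hL : ∀ x y, ‖gradient f x - gradient f y‖ ≤ L * ‖x - y‖)
    (μ : Measure (EuclideanSpace ℝ (Fin d)))
    (hμ : IsUniformSphere μ (Real.sqrt d))
    (x : EuclideanSpace ℝ (Fin d)) :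
    ‖(∫ u, ((f (x + lam • u) - f (x - lam • u)) / (2 * lam)) • u ∂μ) - gradient f x‖
      ≤ L / 2 * lam * (d : ℝ) ^ ((3 : ℝ) / 2) := by
  have := hμ.1
  have hmean : ∫ u, ⟪gradient f x, u⟫ • u ∂μ = gradient f x := by
    rw [hμ.integral_inner_smul, Real.sq_sqrt d.cast_nonneg,
      div_self (Nat.cast_ne_zero.2 (by omega)), one_smul]
  have hbias : (∫ u, twoPointEstimator f lam x u ∂μ) - gradient f x
      = ∫ u, (twoPointEstimator f lam x u - ⟪gradient f x, u⟫ • u) ∂μ := by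
    rw [integral_sub (hμ.integrable_of_continuous (hf.continuous.twoPointEstimator lam x))
      (hμ.integrable_of_continuous (by fun_prop)), hmean]
  have hpow : (d : ℝ) ^ ((3 : ℝ) / 2) = √d ^ 3 := by
    rw [Real.sqrt_eq_rpow, ← Real.rpow_natCast, ← Real.rpow_mul d.cast_nonneg]
    norm_num
  change ‖(∫ u, twoPointEstimator f lam x u ∂μ) - gradient f x‖ ≤ _
  rw [hbias, hpow]
  calc _ ≤ L / 2 * lam * √d ^ 3 * μ.real Set.univ := by
        refine norm_integral_le_of_norm_le_const ?_
        filter_upwards [hμ.2.1] with u hu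
        rw [← hu]
        exact norm_twoPointEstimator_sub_le hf hL hlam x u
    _ = L / 2 * lam * √d ^ 3 := by simp
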